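/- arXiv:1510.08873 — 5 statements merged into one kernel-verified Lean document; each statement's English description precedes it below -/
import Mathlib

section
/- The function L(x) = (1 − F(x))·F''(x)/(F'(x))² satisfies lim_{x→∞} L(x) = −1; that is, F satisfies von Mises' condition for membership in the Gumbel maximal domain of attraction. -/
open Real Filter Topology

/-!
Writing `F' = F R` gives `F'' = F (R² + R')`, so the von Mises ratio equals
`F⁻¹ ((1 - F) + (1 - F) R' / R²)`. The three tail asymptotics have normalising weights
`a, b, c` with `a c = b²`, hence `(1 - F) R' / R² = (a (1 - F)) (c R') / (b R)² → -1`,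
while `1 - F → 0` and `F → 1`.
-/

theorem tendsto_mul_div_sq_of_weights {α 𝕜 : Type*} [NormedField 𝕜] {l : Filter α}
    {a b c u v w : α → 𝕜} (hweights : ∀ᶠ x in l, a x * c x = b x ^ 2)
    (hu : Tendsto (fun x => a x * u x) l (𝓝 1)) (hv : Tendsto (fun x => b x * v x) l (𝓝 1))
    (hw : Tendsto (fun x => c x * w x) l (𝓝 (-1))) :
    Tendsto (fun x => u x * w x / v x ^ 2) l (𝓝 (-1)) := by
  have hlim := (hu.mul hw).div (hv.pow 2) (by norm_num)
  rw [one_mul, one_pow, div_one] at hlim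
  refine hlim.congr' ?_
  filter_upwards [hweights, hv.eventually_ne one_ne_zero] with x hx hbv
  obtain ⟨hb, hv⟩ := mul_ne_zero_iff.mp hbv
  calc a x * u x * (c x * w x) / (b x * v x) ^ 2
      = (a x * c x) * (u x * w x) / (b x ^ 2 * v x ^ 2) := by ring
    _ = u x * w x / v x ^ 2 := by rw [hx, mul_div_mul_left _ _ (pow_ne_zero 2 hb)]

section VonMises

variable {F R : ℝ → ℝ}

theorem deriv_deriv_eq_of_deriv_eq_mul (hfactor : ∀ x, deriv F x = F x * R x) {x : ℝ}
    (hF : DifferentiableAt ℝ F x) (hR : DifferentiableAt ℝ R x) :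
    deriv (deriv F) x = F x * (R x ^ 2 + deriv R x) := by
  rw [funext hfactor, deriv_fun_mul hF hR, hfactor]
  ring

theorem vonMises_ratio_eq_of_deriv_eq_mul (hfactor : ∀ x, deriv F x = F x * R x) {x : ℝ}
    (hF : DifferentiableAt ℝ F x) (hR : DifferentiableAt ℝ R x) (hFx : F x ≠ 0)
    (hRx : R x ≠ 0) :
    (1 - F x) * deriv (deriv F) x / deriv F x ^ 2
      = (F x)⁻¹ * ((1 - F x) + (1 - F x) * deriv R x / R x ^ 2) := by
  rw [deriv_deriv_eq_of_deriv_eq_mul hfactor hF hR, hfactor]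
  field_simp

theorem tendsto_vonMises_ratio_of_tail_weights {a b c : ℝ → ℝ}
    (hFdiff : Differentiable ℝ F) (hRdiff : Differentiable ℝ R)
    (hfactor : ∀ x, deriv F x = F x * R x) (hF1 : Tendsto F atTop (𝓝 1))
    (hweights : ∀ᶠ x in atTop, a x * c x = b x ^ 2)
    (ha : Tendsto (fun x => a x * (1 - F x)) atTop (𝓝 1))
    (hb : Tendsto (fun x => b x * R x) atTop (𝓝 1))
    (hc : Tendsto (fun x => c x * deriv R x) atTop (𝓝 (-1))) :
    Tendsto (fun x => (1 - F x) * deriv (deriv F) x / deriv F x ^ 2) atTop (𝓝 (-1)) := by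
  have hFinv : Tendsto (fun x => (F x)⁻¹) atTop (𝓝 1) := by
    simpa using hF1.inv₀ one_ne_zero
  have hgap : Tendsto (fun x => 1 - F x) atTop (𝓝 0) := by
    simpa using (tendsto_const_nhds (x := (1:ℝ))).sub hF1
  have hlim := hFinv.mul (hgap.add (tendsto_mul_div_sq_of_weights hweights ha hb hc))
  rw [zero_add, one_mul] at hlim
  refine hlim.congr' ?_
  filter_upwards [hF1.eventually_ne one_ne_zero, hb.eventually_ne one_ne_zero] with x hFx hbR
  exact (vonMises_ratio_eq_of_deriv_eq_mul hfactor (hFdiff x) (hRdiff x) hFx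
    (right_ne_zero_of_mul hbR)).symm

end VonMises

theorem rpow_three_fourths_eq_pow {x : ℝ} (hx : 0 ≤ x) :
    x ^ ((3:ℝ)/4) = (x ^ ((1:ℝ)/4)) ^ 3 := by
  rw [← Real.rpow_natCast, ← Real.rpow_mul hx]
  norm_num

theorem vonMises_condition_tracyWidom_general
    (F R : ℝ → ℝ)
    (hFdiff : Differentiable ℝ F)
    (hF1 : Tendsto F atTop (nhds 1))
    (hRdiff : Differentiable ℝ R)
    (hfactor : ∀ x, deriv F x = F x * R x)
    (htail : Tendsto (fun x : ℝ =>
        4 * Real.sqrt π * x ^ ((3:ℝ)/4) * Real.exp ((2/3) * x ^ ((3:ℝ)/2)) * (1 - F x))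
      atTop (nhds 1))
    (hRtail : Tendsto (fun x : ℝ =>
        4 * Real.sqrt π * x ^ ((1:ℝ)/4) * Real.exp ((2/3) * x ^ ((3:ℝ)/2)) * R x)
      atTop (nhds 1))
    (hR'tail : Tendsto (fun x : ℝ =>
        (4 * Real.sqrt π / x ^ ((1:ℝ)/4)) * Real.exp ((2/3) * x ^ ((3:ℝ)/2)) * deriv R x)
      atTop (nhds (-1))) :
    Tendsto (fun x : ℝ => (1 - F x) * deriv (deriv F) x / (deriv F x) ^ 2)
      atTop (nhds (-1)) := by
  refine tendsto_vonMises_ratio_of_tail_weights hFdiff hRdiff hfactor hF1 ?_ htail hRtail hR'tail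
  filter_upwards [eventually_gt_atTop 0] with x hx
  have hroot : x ^ ((1:ℝ)/4) ≠ 0 := (Real.rpow_pos_of_pos hx _).ne'
  rw [rpow_three_fourths_eq_pow hx.le]
  field_simp

/-- Von Mises' condition for the Tracy–Widom law (GOE): the function
`L(x) = (1 - F x) * F''(x) / (F'(x))^2` tends to `-1` as `x → ∞`. -/
theorem vonMises_condition_tracyWidom
    (F R : ℝ → ℝ)
    (hFdiff : Differentiable ℝ F)
    (hF'diff : Differentiable ℝ (deriv F))
    (hFmono : StrictMono F)
    (hF0 : Tendsto F atBot (nhds 0))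
    (hF1 : Tendsto F atTop (nhds 1))
    (hRdiff : Differentiable ℝ R)
    (hfactor : ∀ x, deriv F x = F x * R x)
    (htail : Tendsto (fun x : ℝ =>
        4 * Real.sqrt π * x ^ ((3:ℝ)/4) * Real.exp ((2/3) * x ^ ((3:ℝ)/2)) * (1 - F x))
      atTop (nhds 1))
    (hRtail : Tendsto (fun x : ℝ =>
        4 * Real.sqrt π * x ^ ((1:ℝ)/4) * Real.exp ((2/3) * x ^ ((3:ℝ)/2)) * R x)
      atTop (nhds 1))
    (hR'tail : Tendsto (fun x : ℝ =>
        (4 * Real.sqrt π / x ^ ((1:ℝ)/4)) * Real.exp ((2/3) * x ^ ((3:ℝ)/2)) * deriv R x)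
      atTop (nhds (-1))) :
    Tendsto (fun x : ℝ => (1 - F x) * deriv (deriv F) x / (deriv F x) ^ 2)
      atTop (nhds (-1)) :=
  vonMises_condition_tracyWidom_general F R hFdiff hF1 hRdiff hfactor htail hRtail hR'tail
end

section
/- For every real y, (F(a_m·y + b_m))^m → exp(−e^{−y}) as m → ∞; equivalently, the maximum of m i.i.d. random variables with distribution function F, centered by b_m and scaled by a_m, converges in distribution to the standard Gumbel distribution. -/
open Real Filter Topology

/-! With `G = -log (1 - F)` and hazard rate `h = G' = F' / (1 - F)`, the normalization reads
`G (b m) = log m` and `a m = 1 / h (b m)`, so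
`m (1 - F (a m y + b m)) = exp (-(G (b m + y / h (b m)) - G (b m)))`.
The tail asymptotics give `h x ~ x ^ (1/2)`. By the mean value theorem the increment of `G`
equals `y · h ξ / h (b m)` for some `ξ` with `ξ / b m → 1`, and a function asymptotic to a
power does not see such a perturbation, so the increment tends to `y`. Then
`F (a m y + b m) ^ m → exp (-e^{-y})` by `(1 + t_m / m) ^ m → exp t`. -/

theorem exists_abs_sub_le_and_sub_eq_mul {G g : ℝ → ℝ} (hG : ∀ x, HasDerivAt G (g x) x)
    (x δ : ℝ) : ∃ c, |c - x| ≤ |δ| ∧ G (x + δ) - G x = δ * g c := by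
  have hcont : Continuous G := continuous_iff_continuousAt.2 fun x => (hG x).continuousAt
  rcases lt_trichotomy δ 0 with hδ | rfl | hδ
  · obtain ⟨c, ⟨hc₁, hc₂⟩, hc⟩ :=
      exists_hasDerivAt_eq_slope G g (by linarith : x + δ < x) hcont.continuousOn
        fun z _ => hG z
    refine ⟨c, ?_, ?_⟩
    · rw [abs_of_neg (by linarith : c - x < 0), abs_of_neg hδ]; linarith
    · rw [hc]; field_simp [hδ.ne]; ring
  · exact ⟨x, by simp⟩
  · obtain ⟨c, ⟨hc₁, hc₂⟩, hc⟩ :=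
      exists_hasDerivAt_eq_slope G g (by linarith : x < x + δ) hcont.continuousOn
        fun z _ => hG z
    refine ⟨c, ?_, ?_⟩
    · rw [abs_of_pos (by linarith : 0 < c - x), abs_of_pos hδ]; linarith
    · rw [hc]; field_simp [hδ.ne']; ring

theorem tendsto_comp_div_of_tendsto_div_rpow {α : Type*} {l : Filter α} {h : ℝ → ℝ}
    {p : ℝ} (hh : Tendsto (fun x => h x / x ^ p) atTop (𝓝 1)) {u v : α → ℝ}
    (hu : Tendsto u l atTop) (huv : Tendsto (fun i => v i / u i) l (𝓝 1)) :
    Tendsto (fun i => h (v i) / h (u i)) l (𝓝 1) := by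
  have hv : Tendsto v l atTop := by
    refine (huv.pos_mul_atTop one_pos hu).congr' ?_
    filter_upwards [hu.eventually_gt_atTop 0] with i hi
    exact div_mul_cancel₀ _ hi.ne'
  have hpow : Tendsto (fun i => (v i / u i) ^ p) l (𝓝 1) := by
    simpa [Function.comp_def] using
      (continuousAt_rpow_const 1 p (Or.inl one_ne_zero)).tendsto.comp huv
  have hlim := ((hh.comp hv).mul hpow).div (hh.comp hu) one_ne_zero
  rw [mul_one, div_one] at hlim
  refine hlim.congr' ?_
  filter_upwards [hu.eventually_gt_atTop 0, hv.eventually_gt_atTop 0] with i hu0 hv0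
  simp only [Pi.div_apply, Function.comp_apply]
  rw [div_rpow hv0.le hu0.le]
  have := rpow_pos_of_pos hu0 p
  have := rpow_pos_of_pos hv0 p
  field_simp

theorem tendsto_sub_add_div_of_hasDerivAt {G h : ℝ → ℝ} {p : ℝ} (hp : -1 < p)
    (hG : ∀ x, HasDerivAt G (h x) x) (hh : Tendsto (fun x => h x / x ^ p) atTop (𝓝 1))
    (y : ℝ) :
    Tendsto (fun x => G (x + y / h x) - G x) atTop (𝓝 y) := by
  choose ξ hξ using fun x => exists_abs_sub_le_and_sub_eq_mul hG x (y / h x)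
  have hstep : Tendsto (fun x => y / h x / x) atTop (𝓝 0) := by
    have hgrow : Tendsto (fun x => h x / x ^ p * x ^ (p + 1)) atTop atTop :=
      hh.pos_mul_atTop one_pos (tendsto_rpow_atTop (by linarith))
    refine (tendsto_const_nhds (x := y)).div_atTop hgrow |>.congr' ?_
    filter_upwards [eventually_gt_atTop 0] with x hx
    rw [rpow_add hx, rpow_one]
    have := rpow_pos_of_pos hx p
    field_simp
  have hratio : Tendsto (fun x => ξ x / x) atTop (𝓝 1) := by
    rw [← tendsto_sub_nhds_zero_iff]
    refine squeeze_zero_norm' ?_ (tendsto_zero_iff_norm_tendsto_zero.1 hstep)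
    filter_upwards [eventually_gt_atTop 0] with x hx
    rw [Real.norm_eq_abs, Real.norm_eq_abs, div_sub_one hx.ne', abs_div, abs_div,
      abs_of_pos hx]
    exact div_le_div_of_nonneg_right (hξ x).1 hx.le
  have := (tendsto_comp_div_of_tendsto_div_rpow hh tendsto_id hratio).const_mul y
  rw [mul_one] at this
  refine this.congr fun x => ?_
  rw [(hξ x).2, id]
  ring

theorem Monotone.tendsto_atTop_of_tendsto_comp {α : Type*} {l : Filter α} {F : ℝ → ℝ}
    {c : ℝ} (hF : Monotone F) (hlt : ∀ x, F x < c) {b : α → ℝ}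
    (hb : Tendsto (fun i => F (b i)) l (𝓝 c)) : Tendsto b l atTop :=
  tendsto_atTop.2 fun M => (hb.eventually (eventually_gt_nhds (hlt M))).mono fun _ hi =>
    le_of_not_gt fun h => (hF h.le).not_gt hi

theorem hasDerivAt_neg_log_one_sub {F : ℝ → ℝ} {x : ℝ} (hF : DifferentiableAt ℝ F x)
    (hx : F x < 1) : HasDerivAt (fun x => -log (1 - F x)) (deriv F x / (1 - F x)) x :=
  ((hF.hasDerivAt.const_sub 1).log (sub_pos.2 hx).ne').neg.congr_deriv (by ring)

theorem tendsto_hazard_div_rpow_half {F R : ℝ → ℝ} (hF1 : Tendsto F atTop (𝓝 1))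
    (hfactor : ∀ x, deriv F x = F x * R x)
    (htail : Tendsto (fun x : ℝ =>
        4 * Real.sqrt π * x ^ ((3:ℝ)/4) * Real.exp ((2/3) * x ^ ((3:ℝ)/2)) * (1 - F x))
      atTop (𝓝 1))
    (hRtail : Tendsto (fun x : ℝ =>
        4 * Real.sqrt π * x ^ ((1:ℝ)/4) * Real.exp ((2/3) * x ^ ((3:ℝ)/2)) * R x)
      atTop (𝓝 1)) :
    Tendsto (fun x => deriv F x / (1 - F x) / x ^ ((1:ℝ)/2)) atTop (𝓝 1) := by
  have hlim := hF1.mul (hRtail.div htail one_ne_zero)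
  rw [div_one, mul_one] at hlim
  refine hlim.congr' ?_
  filter_upwards [eventually_gt_atTop 0, htail.eventually_ne one_ne_zero] with x hx hne
  have h34 : x ^ ((3:ℝ)/4) = x ^ ((1:ℝ)/2) * x ^ ((1:ℝ)/4) := by
    rw [← rpow_add hx]; norm_num
  simp only [Pi.div_apply]
  rw [h34] at hne ⊢
  have := rpow_pos_of_pos hx ((1:ℝ)/2)
  have := rpow_pos_of_pos hx ((1:ℝ)/4)
  have := sqrt_pos.2 pi_pos
  have : 1 - F x ≠ 0 := right_ne_zero_of_mul hne
  simp only [hfactor x]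
  field_simp

theorem max_tracyWidom_gumbel_attraction_general
    (F R : ℝ → ℝ) (a b : ℕ → ℝ)
    (hFdiff : Differentiable ℝ F)
    (hFmono : StrictMono F)
    (hF1 : Tendsto F atTop (nhds 1))
    (hfactor : ∀ x, deriv F x = F x * R x)
    (htail : Tendsto (fun x : ℝ =>
        4 * Real.sqrt π * x ^ ((3:ℝ)/4) * Real.exp ((2/3) * x ^ ((3:ℝ)/2)) * (1 - F x))
      atTop (nhds 1))
    (hRtail : Tendsto (fun x : ℝ =>
        4 * Real.sqrt π * x ^ ((1:ℝ)/4) * Real.exp ((2/3) * x ^ ((3:ℝ)/2)) * R x)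
      atTop (nhds 1))
    (hb : ∀ m : ℕ, 2 ≤ m → F (b m) = 1 - 1 / m)
    (ha : ∀ m : ℕ, 2 ≤ m → a m = 1 / (m * deriv F (b m))) :
    ∀ y : ℝ, Tendsto (fun m : ℕ => (F (a m * y + b m)) ^ m)
      atTop (nhds (Real.exp (-Real.exp (-y)))) := by
  intro y
  have hFlt : ∀ x, F x < 1 := fun x =>
    (hFmono (lt_add_one x)).trans_le (hFmono.monotone.ge_of_tendsto hF1 _)
  have hbtop : Tendsto b atTop atTop := by
    refine hFmono.monotone.tendsto_atTop_of_tendsto_comp hFlt ?_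
    have : Tendsto (fun m : ℕ => 1 - 1 / (m : ℝ)) atTop (𝓝 1) := by
      simpa using (tendsto_const_nhds (x := (1 : ℝ))).sub tendsto_one_div_atTop_nhds_zero_nat
    exact this.congr' (eventually_atTop.2 ⟨2, fun m hm => (hb m hm).symm⟩)
  have hshift := (tendsto_sub_add_div_of_hasDerivAt (p := 1 / 2) (by norm_num)
    (fun x => hasDerivAt_neg_log_one_sub (hFdiff x) (hFlt x))
    (tendsto_hazard_div_rpow_half hF1 hfactor htail hRtail) y).comp hbtop
  have hsurv : Tendsto (fun m : ℕ => m * (F (a m * y + b m) - 1)) atTop (𝓝 (-exp (-y))) := by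
    refine ((continuous_exp.tendsto _).comp hshift.neg).neg.congr' ?_
    filter_upwards [eventually_ge_atTop 2] with m hm
    have hbm : 1 - F (b m) = 1 / m := by rw [hb m hm]; ring
    have ham : b m + y / (deriv F (b m) / (1 - F (b m))) = a m * y + b m := by
      simp only [ha m hm, hbm, one_div, div_inv_eq_mul]; ring
    simp only [Function.comp_apply]
    rw [ham, neg_sub_neg, neg_sub, exp_sub, exp_log (sub_pos.2 (hFlt _)),
      exp_log (sub_pos.2 (hFlt _)), hbm]
    field_simp
    ring
  simpa using Real.tendsto_one_add_pow_exp_of_tendsto hsurv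

/-- The maximum of `m` i.i.d. random variables with Tracy–Widom-type
distribution function `F`, centered by `b m` and scaled by `a m`, converges in
distribution to the standard Gumbel distribution: for every real `y`,
`(F (a m * y + b m))^m → exp (-exp (-y))` as `m → ∞`. -/
theorem max_tracyWidom_gumbel_attraction
    (F R : ℝ → ℝ) (a b : ℕ → ℝ)
    (hFdiff : Differentiable ℝ F)
    (hF'diff : Differentiable ℝ (deriv F))
    (hFmono : StrictMono F)
    (hF0 : Tendsto F atBot (nhds 0))
    (hF1 : Tendsto F atTop (nhds 1))
    (hRdiff : Differentiable ℝ R)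
    (hfactor : ∀ x, deriv F x = F x * R x)
    (htail : Tendsto (fun x : ℝ =>
        4 * Real.sqrt π * x ^ ((3:ℝ)/4) * Real.exp ((2/3) * x ^ ((3:ℝ)/2)) * (1 - F x))
      atTop (nhds 1))
    (hRtail : Tendsto (fun x : ℝ =>
        4 * Real.sqrt π * x ^ ((1:ℝ)/4) * Real.exp ((2/3) * x ^ ((3:ℝ)/2)) * R x)
      atTop (nhds 1))
    (hR'tail : Tendsto (fun x : ℝ =>
        (4 * Real.sqrt π / x ^ ((1:ℝ)/4)) * Real.exp ((2/3) * x ^ ((3:ℝ)/2)) * deriv R x)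
      atTop (nhds (-1)))
    (hb : ∀ m : ℕ, 2 ≤ m → F (b m) = 1 - 1 / m)
    (ha : ∀ m : ℕ, 2 ≤ m → a m = 1 / (m * deriv F (b m))) :
    ∀ y : ℝ, Tendsto (fun m : ℕ => (F (a m * y + b m)) ^ m)
      atTop (nhds (Real.exp (-Real.exp (-y)))) :=
  max_tracyWidom_gumbel_attraction_general F R a b hFdiff hFmono hF1 hfactor htail hRtail hb ha
end

section
/- The normalizing constants b_m satisfy b_m / [ (3/4)·log(m²/(12π)) ]^{2/3} → 1 as m → ∞. -/
/-!
Put `tₘ = bₘ^{3/2}`. Since `1 - F(bₘ) = 1/m → 0` and `F < 1`, `bₘ → ∞`, so the tail asymptotic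
says `4√π bₘ^{3/4} e^{(2/3) tₘ} / m → 1`. Taking logarithms, `(2/3) tₘ + O(log tₘ) = log m + o(1)`,
hence `tₘ ~ (3/2) log m ~ (3/4) log (m² / (12π))`, and raising to the power `2/3` gives the claim.
-/

open Real Filter

open Asymptotics Topology

lemma StrictMono.tendsto_atTop_of_tendsto_comp {α β γ : Type*} [LinearOrder β] [NoMaxOrder β]
    [LinearOrder γ] [TopologicalSpace γ] [OrderClosedTopology γ] {l : Filter α}
    {F : β → γ} {c : γ} (hF : StrictMono F) (hFc : Tendsto F atTop (𝓝 c)) {b : α → β}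
    (hb : Tendsto (F ∘ b) l (𝓝 c)) : Tendsto b l atTop := by
  refine Filter.tendsto_atTop.2 fun M => ?_
  obtain ⟨M', hM'⟩ := exists_gt M
  have hFM : F M < c := (hF hM').trans_le (hF.monotone.ge_of_tendsto hFc M')
  filter_upwards [hb.eventually_const_lt hFM] with m hm
  exact (hF.lt_iff_lt.mp hm).le

lemma Asymptotics.IsEquivalent.const_mul {α : Type*} {l : Filter α} {u v : α → ℝ}
    (h : u ~[l] v) (c : ℝ) : (fun x => c * u x) ~[l] fun x => c * v x :=
  IsEquivalent.refl.mul h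

lemma Asymptotics.IsEquivalent.rpow_of_eventually_nonneg {α : Type*} {l : Filter α}
    {u v : α → ℝ} (h : u ~[l] v) (hv : ∀ᶠ x in l, 0 ≤ v x) (r : ℝ) :
    (fun x => u x ^ r) ~[l] fun x => v x ^ r := by
  obtain ⟨φ, hφ, huv⟩ := h.exists_eq_mul
  refine isEquivalent_iff_exists_eq_mul.mpr ⟨fun x => φ x ^ r, ?_, ?_⟩
  · simpa using hφ.rpow_const (p := r) (Or.inl one_ne_zero)
  · filter_upwards [hφ.eventually_const_lt zero_lt_one, hv, huv] with x hφx hvx hx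
    simp [hx, mul_rpow hφx.le hvx]

lemma isEquivalent_rpow_log_div_of_tendsto_mul_exp_div {α : Type*} {l : Filter α}
    {x y : α → ℝ} {C a c p : ℝ} (hC : 0 < C) (hc : c ≠ 0) (hp : 0 < p)
    (hx : Tendsto x l atTop)
    (h : Tendsto (fun n => C * x n ^ a * exp (c * x n ^ p) / y n) l (𝓝 1)) :
    (fun n => x n ^ p) ~[l] fun n => log (y n) / c := by
  set ratio := fun n => C * x n ^ a * exp (c * x n ^ p) / y n
  have hlog_ratio : Tendsto (fun n => log (ratio n)) l (𝓝 0) := by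
    have hlog := (continuousAt_log one_ne_zero).tendsto.comp h
    rwa [log_one] at hlog
  have hxp : Tendsto (fun n => x n ^ p) l atTop := (tendsto_rpow_atTop hp).comp hx
  have hlog_x : (fun n => a * log (x n) / c) =o[l] fun n => x n ^ p :=
    (((isLittleO_log_rpow_atTop hp).comp_tendsto hx).const_mul_left a).const_mul_left c⁻¹
      |>.congr_left fun n => by simp [div_eq_inv_mul]
  have hbounded : (fun n => (log C - log (ratio n)) / c) =o[l] fun n => x n ^ p := by
    have hlim := (tendsto_const_nhds (x := log C)).sub hlog_ratio |>.div_const c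
    exact hlim.isBigO_one ℝ |>.trans_isLittleO <|
      (isLittleO_one_left_iff ℝ).mpr (tendsto_abs_atTop_atTop.comp hxp)
  have heq : ∀ᶠ n in l, x n ^ p + (a * log (x n) / c + (log C - log (ratio n)) / c)
      = log (y n) / c := by
    filter_upwards [hx.eventually_gt_atTop 0, h.eventually_ne one_ne_zero] with n hxn hrn
    have hyn : y n ≠ 0 := fun hy => hrn (by simp [ratio, hy])
    simp only [ratio]
    rw [log_div (by positivity) hyn, log_mul (by positivity) (by positivity),
      log_mul hC.ne' (by positivity), log_rpow hxn, log_exp]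
    field_simp
    ring
  exact ((IsEquivalent.refl.add_isLittleO (hlog_x.add hbounded)).congr_left heq).symm

lemma isEquivalent_log_pow_div_const {K : ℝ} (hK : K ≠ 0) (k : ℕ) (hk : k ≠ 0) :
    (fun x : ℝ => log (x ^ k / K)) ~[atTop] fun x => k * log x := by
  have hlog : Tendsto (fun x : ℝ => k * log x) atTop atTop :=
    tendsto_log_atTop.const_mul_atTop (by positivity)
  refine (IsEquivalent.refl.add_const_of_norm_tendsto_atTop
    (c := -log K) (tendsto_abs_atTop_atTop.comp hlog)).congr_left ?_
  filter_upwards [eventually_gt_atTop 0] with x hx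
  rw [log_div (by positivity) hK, log_pow]
  ring

theorem bm_asymptotic_general
    (F : ℝ → ℝ) (b : ℕ → ℝ)
    (hFmono : StrictMono F)
    (hF1 : Tendsto F atTop (nhds 1))
    (htail : Tendsto (fun x : ℝ =>
        4 * Real.sqrt π * x ^ ((3:ℝ)/4) * Real.exp ((2/3) * x ^ ((3:ℝ)/2)) * (1 - F x))
      atTop (nhds 1))
    (hb : ∀ m : ℕ, 2 ≤ m → F (b m) = 1 - 1 / m) :
    Tendsto (fun m : ℕ =>
        b m / ((3/4) * Real.log ((m : ℝ) ^ 2 / (12 * π))) ^ ((2:ℝ)/3))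
      atTop (nhds 1) := by
  have htail_b : ∀ᶠ m : ℕ in atTop, 1 - F (b m) = 1 / m :=
    (eventually_ge_atTop 2).mono fun m hm => by rw [hb m hm]; ring
  have hb_top : Tendsto b atTop atTop := by
    refine hFmono.tendsto_atTop_of_tendsto_comp hF1 ?_
    have h := (tendsto_const_nhds (x := (1 : ℝ))).sub tendsto_one_div_atTop_nhds_zero_nat
    rw [sub_zero] at h
    exact h.congr' (htail_b.mono fun m hm => by simp [← hm])
  have hratio : Tendsto (fun m : ℕ =>
      4 * √π * b m ^ ((3:ℝ)/4) * exp ((2/3) * b m ^ ((3:ℝ)/2)) / m) atTop (𝓝 1) :=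
    (htail.comp hb_top).congr' (htail_b.mono fun m hm => by simp [hm, div_eq_mul_inv])
  have ht : (fun m : ℕ => b m ^ ((3:ℝ)/2)) ~[atTop] fun m => log m / (2/3) :=
    isEquivalent_rpow_log_div_of_tendsto_mul_exp_div (by positivity) (by norm_num) (by norm_num)
      hb_top hratio
  have hD : (fun m : ℕ => (3/4) * log ((m : ℝ) ^ 2 / (12 * π))) ~[atTop]
      fun m => (3/4) * ((2 : ℕ) * log m) :=
    ((isEquivalent_log_pow_div_const (by positivity) 2 two_ne_zero).comp_tendsto
      tendsto_natCast_atTop_atTop).const_mul _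
  have htD := ht.trans (hD.symm.congr_left (Eventually.of_forall fun m => by push_cast; ring))
  have hDpos := htD.symm.eventually_pos
    ((hb_top.eventually_gt_atTop 0).mono fun m hm => by positivity)
  have hb_eq : (fun m => (b m ^ ((3:ℝ)/2)) ^ ((2:ℝ)/3)) =ᶠ[atTop] b :=
    (hb_top.eventually_ge_atTop 0).mono fun m hm => by simp only [← rpow_mul hm]; norm_num
  have hbD := (htD.rpow_of_eventually_nonneg (hDpos.mono fun m hm => hm.le) ((2:ℝ)/3)).congr_left
    hb_eq
  exact (isEquivalent_iff_tendsto_one (hDpos.mono fun m hm => by positivity)).mp hbD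

/-- The Gumbel normalizing constants `b m` for the Tracy–Widom law satisfy
`b m / ((3/4) * log (m^2 / (12π)))^(2/3) → 1` as `m → ∞`. -/
theorem bm_asymptotic
    (F : ℝ → ℝ) (b : ℕ → ℝ)
    (hFcont : Continuous F)
    (hFmono : StrictMono F)
    (hF0 : Tendsto F atBot (nhds 0))
    (hF1 : Tendsto F atTop (nhds 1))
    (htail : Tendsto (fun x : ℝ =>
        4 * Real.sqrt π * x ^ ((3:ℝ)/4) * Real.exp ((2/3) * x ^ ((3:ℝ)/2)) * (1 - F x))
      atTop (nhds 1))
    (hb : ∀ m : ℕ, 2 ≤ m → F (b m) = 1 - 1 / m) :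
    Tendsto (fun m : ℕ =>
        b m / ((3/4) * Real.log ((m : ℝ) ^ 2 / (12 * π))) ^ ((2:ℝ)/3))
      atTop (nhds 1) :=
  bm_asymptotic_general F b hFmono hF1 htail hb
end

section
/- Suppose there is a constant C > 0 such that |G_p(x) − F(x)| ≤ C·p^{−2/3}·e^{−x/2} for all x ≥ 0 and all p; suppose m_p → ∞ with limsup_{p→∞} m_p / p^{2/3} < ∞; suppose a_m > 0 for all m and for each fixed y ∈ ℝ one has a_{m_p}·y + b_{m_p} → ∞ as p → ∞; and suppose for each y ∈ ℝ that (F(a_{m_p}·y + b_{m_p}))^{m_p} → exp(−e^{−y}) as p → ∞. Then for each y ∈ ℝ, (G_p(a_{m_p}·y + b_{m_p}))^{m_p} → exp(−e^{−y}) as p → ∞. -/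
/-!
Since `G p` and `F` take values in `[0, 1]`, `|u ^ m - v ^ m| ≤ m |u - v|` reduces the claim
to `m_p |G_p(x_p) - F(x_p)| → 0` along `x_p = a_{m_p} y + b_{m_p} → ∞`. Johnstone's rate bounds
this by `C (m_p / p^{2/3}) e^{-x_p/2}`: a bounded factor times a factor tending to `0`.
-/

open Real Filter Topology

theorem abs_pow_sub_pow_le_mul_abs_sub {α : Type*} [CommRing α] [LinearOrder α] [IsOrderedRing α]
    {u v : α} (hu : |u| ≤ 1) (hv : |v| ≤ 1) (n : ℕ) : |u ^ n - v ^ n| ≤ n * |u - v| :=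
  calc |u ^ n - v ^ n| ≤ |u - v| * n * max |u| |v| ^ (n - 1) := abs_pow_sub_pow_le u v n
    _ ≤ |u - v| * n * 1 := by
        gcongr
        exact pow_le_one₀ (le_max_of_le_left (abs_nonneg u)) (max_le hu hv)
    _ = n * |u - v| := by ring

theorem abs_le_one_of_mem_Icc {α : Type*} [Ring α] [LinearOrder α] [IsOrderedRing α] {u : α}
    (hu : u ∈ Set.Icc (0 : α) 1) : |u| ≤ 1 :=
  (abs_of_nonneg hu.1).trans_le hu.2

theorem Filter.Tendsto.pow_of_tendsto_mul_abs_sub {ι : Type*} {l : Filter ι} {f g : ι → ℝ}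
    {n : ι → ℕ} {L : ℝ} (hf : ∀ i, |f i| ≤ 1) (hg : ∀ i, |g i| ≤ 1)
    (hfL : Tendsto (fun i => f i ^ n i) l (𝓝 L))
    (hgf : Tendsto (fun i => n i * |g i - f i|) l (𝓝 0)) :
    Tendsto (fun i => g i ^ n i) l (𝓝 L) := by
  have hdiff : Tendsto (fun i => g i ^ n i - f i ^ n i) l (𝓝 0) :=
    squeeze_zero_norm (fun i => abs_pow_sub_pow_le_mul_abs_sub (hg i) (hf i) (n i)) hgf
  simpa using hfL.add hdiff

theorem gumbel_transfer_johnstone_rate_general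
    (G : ℕ → ℝ → ℝ) (F : ℝ → ℝ) (m : ℕ → ℕ) (a b : ℕ → ℝ) (C : ℝ)
    (hG01 : ∀ p x, G p x ∈ Set.Icc (0:ℝ) 1)
    (hF01 : ∀ x, F x ∈ Set.Icc (0:ℝ) 1)
    (hrate : ∀ p : ℕ, 1 ≤ p → ∀ x : ℝ, 0 ≤ x →
      |G p x - F x| ≤ C * (p : ℝ) ^ (-(2:ℝ)/3) * Real.exp (-x/2))
    (hlimsup : IsBoundedUnder (· ≤ ·) atTop
      (fun p : ℕ => (m p : ℝ) / (p : ℝ) ^ ((2:ℝ)/3)))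
    (hab : ∀ y : ℝ, Tendsto (fun p : ℕ => a (m p) * y + b (m p)) atTop atTop)
    (hF : ∀ y : ℝ, Tendsto (fun p : ℕ => (F (a (m p) * y + b (m p))) ^ (m p))
      atTop (nhds (Real.exp (-Real.exp (-y))))) :
    ∀ y : ℝ, Tendsto (fun p : ℕ => (G p (a (m p) * y + b (m p))) ^ (m p))
      atTop (nhds (Real.exp (-Real.exp (-y)))) := by
  intro y
  set x : ℕ → ℝ := fun p => a (m p) * y + b (m p)
  have hexp : Tendsto (fun p => Real.exp (-x p / 2)) atTop (𝓝 0) :=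
    tendsto_exp_atBot.comp <| (tendsto_neg_atTop_atBot.comp (hab y)).atBot_div_const two_pos
  have hratio : IsBoundedUnder (· ≤ ·) atTop
      ((‖·‖) ∘ fun p : ℕ => C * ((m p : ℝ) / (p : ℝ) ^ ((2:ℝ)/3))) := by
    obtain ⟨M, hM⟩ := hlimsup
    refine ⟨|C| * M, eventually_map.2 ?_⟩
    filter_upwards [eventually_map.1 hM] with p hp
    rw [Function.comp_apply, norm_mul, Real.norm_eq_abs,
      Real.norm_of_nonneg (by positivity)]
    gcongr
  refine (hF y).pow_of_tendsto_mul_abs_sub (fun p => abs_le_one_of_mem_Icc (hF01 _))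
    (fun p => abs_le_one_of_mem_Icc (hG01 _ _)) <|
    squeeze_zero' (.of_forall fun p => by positivity) ?_ (hexp.zero_mul_isBoundedUnder_le hratio)
  filter_upwards [(hab y).eventually_ge_atTop 0, eventually_ge_atTop 1] with p hx hp
  calc (m p : ℝ) * |G p (x p) - F (x p)|
      ≤ m p * (C * (p : ℝ) ^ (-(2:ℝ)/3) * Real.exp (-x p / 2)) := by
        gcongr; exact hrate p hp (x p) hx
    _ = Real.exp (-x p / 2) * (C * ((m p : ℝ) / (p : ℝ) ^ ((2:ℝ)/3))) := by
        rw [neg_div, Real.rpow_neg (Nat.cast_nonneg p)]; ring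

/-- Transfer of the Gumbel limit from the Tracy–Widom law `F` to the finite-`p`
distributions `G p` under Johnstone's rate bound: if
`|G p x - F x| ≤ C p^{-2/3} e^{-x/2}` for `x ≥ 0`, `m p → ∞` with
`limsup m p / p^{2/3} < ∞`, `a m > 0`, `a (m p) y + b (m p) → ∞` and
`(F (a (m p) y + b (m p)))^(m p) → exp (-e^{-y})`, then also
`(G p (a (m p) y + b (m p)))^(m p) → exp (-e^{-y})`. -/
theorem gumbel_transfer_johnstone_rate
    (G : ℕ → ℝ → ℝ) (F : ℝ → ℝ) (m : ℕ → ℕ) (a b : ℕ → ℝ) (C : ℝ)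
    (hC : 0 < C)
    (hG01 : ∀ p x, G p x ∈ Set.Icc (0:ℝ) 1)
    (hF01 : ∀ x, F x ∈ Set.Icc (0:ℝ) 1)
    (hrate : ∀ p : ℕ, 1 ≤ p → ∀ x : ℝ, 0 ≤ x →
      |G p x - F x| ≤ C * (p : ℝ) ^ (-(2:ℝ)/3) * Real.exp (-x/2))
    (hm : Tendsto m atTop atTop)
    (hlimsup : IsBoundedUnder (· ≤ ·) atTop
      (fun p : ℕ => (m p : ℝ) / (p : ℝ) ^ ((2:ℝ)/3)))
    (ha : ∀ k : ℕ, 0 < a k)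
    (hab : ∀ y : ℝ, Tendsto (fun p : ℕ => a (m p) * y + b (m p)) atTop atTop)
    (hF : ∀ y : ℝ, Tendsto (fun p : ℕ => (F (a (m p) * y + b (m p))) ^ (m p))
      atTop (nhds (Real.exp (-Real.exp (-y))))) :
    ∀ y : ℝ, Tendsto (fun p : ℕ => (G p (a (m p) * y + b (m p))) ^ (m p))
      atTop (nhds (Real.exp (-Real.exp (-y)))) :=
  gumbel_transfer_johnstone_rate_general G F m a b C hG01 hF01 hrate hlimsup hab hF
end

section
/- For each positive integer p, let X^p_1, …, X^p_{m_p} be independent identically distributed real random variables with common cumulative distribution function G_p. Under the hypotheses that |G_p(x) − F(x)| ≤ C·p^{−2/3}·e^{−x/2} for all x ≥ 0 and all p (for some constant C > 0 and a cumulative distribution function F), that m_p → ∞ with limsup_{p→∞} m_p/p^{2/3} < ∞, that a_m > 0, a_{m_p}·y + b_{m_p} → ∞ for each fixed y, and that (F(a_{m_p}·y + b_{m_p}))^{m_p} → exp(−e^{−y}) for each y, the normalized maximum Y^p = (max_{1≤k≤m_p} X^p_k − b_{m_p})/a_{m_p} satisfies P(Y^p ≤ y) → exp(−e^{−y}) for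 every y ∈ ℝ; i.e., Y^p converges in distribution to the standard Gumbel distribution. -/
open Real Filter MeasureTheory ProbabilityTheory Topology

/-! By independence, `P(Y^p ≤ y) = G_p(x_p)^{m_p}` with `x_p = a_{m_p} y + b_{m_p}`. Since all values
lie in `[0, 1]`, `|G_p(x_p)^{m_p} - F(x_p)^{m_p}| ≤ m_p |G_p(x_p) - F(x_p)|
≤ (m_p / p^{2/3}) · C e^{-x_p/2}`, a bounded sequence times one tending to `0` because `x_p → ∞`.
Hence `P(Y^p ≤ y)` has the same limit as `F(x_p)^{m_p}`. -/

theorem abs_pow_sub_pow_le_of_abs_le_one {α : Type*} [CommRing α] [LinearOrder α]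
    [IsOrderedRing α] {a b : α} (ha : |a| ≤ 1) (hb : |b| ≤ 1) (n : ℕ) :
    |a ^ n - b ^ n| ≤ n * |a - b| :=
  calc |a ^ n - b ^ n| ≤ |a - b| * n * max |a| |b| ^ (n - 1) := abs_pow_sub_pow_le ..
    _ ≤ |a - b| * n * 1 := by gcongr; exact pow_le_one₀ (by positivity) (max_le ha hb)
    _ = n * |a - b| := by ring

theorem tendsto_pow_sub_pow_zero_of_natCast_mul_abs_sub {ι : Type*} {l : Filter ι}
    {u v : ι → ℝ} {n : ι → ℕ} (hu : ∀ i, |u i| ≤ 1) (hv : ∀ i, |v i| ≤ 1)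
    (h : Tendsto (fun i => n i * |u i - v i|) l (𝓝 0)) :
    Tendsto (fun i => u i ^ n i - v i ^ n i) l (𝓝 0) :=
  squeeze_zero_norm (fun i => abs_pow_sub_pow_le_of_abs_le_one (hu i) (hv i) (n i)) h

theorem measure_sup'_le_eq_pow {Ω ι : Type*} [MeasurableSpace Ω] {μ : Measure Ω} [Fintype ι]
    {X : ι → Ω → ℝ} (hX : iIndepFun X μ) (h : (Finset.univ : Finset ι).Nonempty) {x g : ℝ}
    (hcdf : ∀ k, (μ {ω | X k ω ≤ x}).toReal = g) :
    (μ {ω | Finset.univ.sup' h (fun k => X k ω) ≤ x}).toReal = g ^ Fintype.card ι := by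
  have hset : {ω | Finset.univ.sup' h (fun k => X k ω) ≤ x} = ⋂ k, X k ⁻¹' Set.Iic x := by
    ext ω
    simp [Finset.sup'_le_iff]
  rw [hset, hX.meas_iInter fun k => ⟨Set.Iic x, measurableSet_Iic, rfl⟩, ENNReal.toReal_prod]
  simp only [Set.preimage, Set.mem_Iic, hcdf, Finset.prod_const, Finset.card_univ]

theorem tendsto_natCast_mul_abs_zero_of_rate {r C : ℝ} {d : ℕ → ℝ → ℝ} {m : ℕ → ℕ}
    {x : ℕ → ℝ}
    (hrate : ∀ p : ℕ, 1 ≤ p → ∀ x : ℝ, 0 ≤ x → |d p x| ≤ C * (p : ℝ) ^ (-r) * exp (-x / 2))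
    (hm : IsBoundedUnder (· ≤ ·) atTop (fun p : ℕ => (m p : ℝ) / (p : ℝ) ^ r))
    (hx : Tendsto x atTop atTop) :
    Tendsto (fun p => (m p : ℝ) * |d p (x p)|) atTop (𝓝 0) := by
  have hbound : ∀ᶠ p : ℕ in atTop,
      (m p : ℝ) * |d p (x p)| ≤ (m p : ℝ) / (p : ℝ) ^ r * (C * exp (-x p / 2)) := by
    filter_upwards [eventually_ge_atTop 1, hx.eventually_ge_atTop 0] with p hp hxp
    calc (m p : ℝ) * |d p (x p)| ≤ m p * (C * (p : ℝ) ^ (-r) * exp (-x p / 2)) := by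
          gcongr; exact hrate p hp (x p) hxp
      _ = (m p : ℝ) / (p : ℝ) ^ r * (C * exp (-x p / 2)) := by
          rw [rpow_neg (Nat.cast_nonneg p)]; ring
  have hdecay : Tendsto (fun p => C * exp (-x p / 2)) atTop (𝓝 0) := by
    simpa [neg_div] using
      (tendsto_exp_neg_atTop_nhds_zero.comp (hx.atTop_div_const two_pos)).const_mul C
  have hm' : IsBoundedUnder (· ≤ ·) atTop (norm ∘ fun p : ℕ => (m p : ℝ) / (p : ℝ) ^ r) :=
    hm.mono_le (.of_forall fun p => (Real.norm_of_nonneg (by positivity)).le)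
  exact squeeze_zero' (.of_forall fun p => by positivity) hbound
    (isBoundedUnder_le_mul_tendsto_zero hm' hdecay)

theorem normalized_max_greatest_root_gumbel_general
    (G : ℕ → ℝ → ℝ) (F : ℝ → ℝ) (m : ℕ → ℕ) (a b : ℕ → ℝ) (C : ℝ)
    (Ω : ℕ → Type) [∀ p, MeasurableSpace (Ω p)]
    (μ : ∀ p, Measure (Ω p))
    (X : ∀ p : ℕ, Fin (m p) → Ω p → ℝ)
    (hmpos : ∀ p, 0 < m p)
    (hindep : ∀ p, ProbabilityTheory.iIndepFun
      (X p) (μ p))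
    (hcdf : ∀ p k x, ((μ p) {ω | X p k ω ≤ x}).toReal = G p x)
    (hG01 : ∀ p x, G p x ∈ Set.Icc (0:ℝ) 1)
    (hF01 : ∀ x, F x ∈ Set.Icc (0:ℝ) 1)
    (hrate : ∀ p : ℕ, 1 ≤ p → ∀ x : ℝ, 0 ≤ x →
      |G p x - F x| ≤ C * (p : ℝ) ^ (-(2:ℝ)/3) * Real.exp (-x/2))
    (hlimsup : IsBoundedUnder (· ≤ ·) atTop
      (fun p : ℕ => (m p : ℝ) / (p : ℝ) ^ ((2:ℝ)/3)))
    (ha : ∀ k : ℕ, 0 < a k)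
    (hab : ∀ y : ℝ, Tendsto (fun p : ℕ => a (m p) * y + b (m p)) atTop atTop)
    (hF : ∀ y : ℝ, Tendsto (fun p : ℕ => (F (a (m p) * y + b (m p))) ^ (m p))
      atTop (nhds (Real.exp (-Real.exp (-y))))) :
    ∀ y : ℝ, Tendsto (fun p : ℕ =>
        ((μ p) {ω |
          (Finset.univ.sup'
              (Finset.univ_nonempty_iff.mpr (Fin.pos_iff_nonempty.mp (hmpos p)))
              (fun k => X p k ω) - b (m p)) / a (m p) ≤ y}).toReal)
      atTop (nhds (Real.exp (-Real.exp (-y)))) := by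
  intro y
  have habs_le_one {t : ℝ} (ht : t ∈ Set.Icc (0 : ℝ) 1) : |t| ≤ 1 :=
    (abs_of_nonneg ht.1).trans_le ht.2
  have hrate' := tendsto_natCast_mul_abs_zero_of_rate (by simpa only [neg_div] using hrate)
    hlimsup (hab y)
  have hGF := tendsto_pow_sub_pow_zero_of_natCast_mul_abs_sub (fun p => habs_le_one (hG01 p _))
    (fun p => habs_le_one (hF01 _)) hrate'
  have hlim := (hF y).add hGF
  rw [add_zero] at hlim
  refine hlim.congr fun p => ?_
  simp_rw [div_le_iff₀ (ha _), sub_le_iff_le_add, mul_comm y]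
  rw [measure_sup'_le_eq_pow (hindep p) _ fun k => hcdf p k _, Fintype.card_fin]
  ring

/-- Main theorem: for each `p` let `X p 0, …, X p (m p - 1)` be i.i.d. random
variables with common cdf `G p`. Under Johnstone's rate bound
`|G p x - F x| ≤ C p^{-2/3} e^{-x/2}` for `x ≥ 0`, `m p → ∞` with
`limsup m p / p^{2/3} < ∞`, `a > 0`, `a (m p) y + b (m p) → ∞` and
`(F (a (m p) y + b (m p)))^(m p) → exp(-e^{-y})`, the normalized maximum
`Y^p = (max_k X p k - b (m p)) / a (m p)` converges in distribution to the
standard Gumbel law: `P(Y^p ≤ y) → exp (-e^{-y})` for every `y`. -/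
theorem normalized_max_greatest_root_gumbel
    (G : ℕ → ℝ → ℝ) (F : ℝ → ℝ) (m : ℕ → ℕ) (a b : ℕ → ℝ) (C : ℝ)
    (Ω : ℕ → Type) [∀ p, MeasurableSpace (Ω p)]
    (μ : ∀ p, Measure (Ω p)) [∀ p, IsProbabilityMeasure (μ p)]
    (X : ∀ p : ℕ, Fin (m p) → Ω p → ℝ)
    (hmpos : ∀ p, 0 < m p)
    (hXmeas : ∀ p k, Measurable (X p k))
    (hindep : ∀ p, ProbabilityTheory.iIndepFun
      (X p) (μ p))
    (hcdf : ∀ p k x, ((μ p) {ω | X p k ω ≤ x}).toReal = G p x)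
    (hC : 0 < C)
    (hG01 : ∀ p x, G p x ∈ Set.Icc (0:ℝ) 1)
    (hF01 : ∀ x, F x ∈ Set.Icc (0:ℝ) 1)
    (hrate : ∀ p : ℕ, 1 ≤ p → ∀ x : ℝ, 0 ≤ x →
      |G p x - F x| ≤ C * (p : ℝ) ^ (-(2:ℝ)/3) * Real.exp (-x/2))
    (hm : Tendsto m atTop atTop)
    (hlimsup : IsBoundedUnder (· ≤ ·) atTop
      (fun p : ℕ => (m p : ℝ) / (p : ℝ) ^ ((2:ℝ)/3)))
    (ha : ∀ k : ℕ, 0 < a k)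
    (hab : ∀ y : ℝ, Tendsto (fun p : ℕ => a (m p) * y + b (m p)) atTop atTop)
    (hF : ∀ y : ℝ, Tendsto (fun p : ℕ => (F (a (m p) * y + b (m p))) ^ (m p))
      atTop (nhds (Real.exp (-Real.exp (-y))))) :
    ∀ y : ℝ, Tendsto (fun p : ℕ =>
        ((μ p) {ω |
          (Finset.univ.sup'
              (Finset.univ_nonempty_iff.mpr (Fin.pos_iff_nonempty.mp (hmpos p)))
              (fun k => X p k ω) - b (m p)) / a (m p) ≤ y}).toReal)
      atTop (nhds (Real.exp (-Real.exp (-y)))) :=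
  normalized_max_greatest_root_gumbel_general G F m a b C Ω μ X hmpos hindep hcdf hG01 hF01 hrate
    hlimsup ha hab hF
end
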